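/- arXiv:1005.1974 — 3 statements merged into one kernel-verified Lean document; each statement's English description precedes it below -/
import Mathlib

section
/- In a finite product X = ∏_{i<n} X(F_i), if U ⊆ X is a clopen set whose trace on ℕⁿ contains the 'cofinite box' 𝕋ᴺ = (ℕ \ {0,…,N−1})ⁿ, then U contains Tᴺ = ∏_{i<n}(X(F_i) \ {0,…,N−1}). -/
/-- ℕ* : the nonprincipal ultrafilters on ℕ, with the topology inherited from βℕ. -/
def NStar : Type := {U : Ultrafilter ℕ // (U : Filter ℕ) ≤ Filter.cofinite}

instance : TopologicalSpace NStar := instTopologicalSpaceSubtype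

/-- A* : the set of nonprincipal ultrafilters containing A. -/
def AStar (A : Set ℕ) : Set NStar := {U | A ∈ U.1}

/-- The space X(F): underlying set ℕ ⊔ F. -/
def XF (F : Set (Set NStar)) : Type := ℕ ⊕ F

/-- The coarsest topology making each {n} (n ∈ ℕ) open, and each {K} ∪ A open
whenever K ∈ F, A ⊆ ℕ and K ⊆ A*. -/
instance (F : Set (Set NStar)) : TopologicalSpace (XF F) :=
  TopologicalSpace.generateFrom
    ({S | ∃ n : ℕ, S = {Sum.inl n}} ∪
     {S | ∃ (K : F) (A : Set ℕ), (K : Set NStar) ⊆ AStar A ∧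
        S = insert (Sum.inr K) (Sum.inl '' A)})

/-! Each point `K` of `X(F) ∖ ℕ` is a limit of every ultrafilter `p ∈ K`: the traces on `ℕ` of
its neighbourhoods belong to `p`. Since `p` is nonprincipal, `K` is then in the closure of every
cofinite subset of `ℕ`, so the closure of `ℕ ∖ N` in `X(F)` is `X(F) ∖ N`. The closure of a
product being the product of the closures, a closed set containing `(ℕ ∖ N)ⁿ` contains
`∏ (X(F_i) ∖ N)`. -/

namespace XF

variable {F : Set (Set NStar)}

theorem preimage_inl_mem_of_isOpen {K : F} {p : NStar} (hp : p ∈ (K : Set NStar))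
    {V : Set (XF F)} (hV : IsOpen V) (hKV : Sum.inr K ∈ V) :
    Sum.inl ⁻¹' V ∈ p.1 := by
  induction hV with
  | basic s hs =>
    rcases hs with ⟨m, rfl⟩ | ⟨K', A, hK'A, rfl⟩
    · exact absurd (Set.mem_singleton_iff.mp hKV) Sum.inr_ne_inl
    · obtain rfl : K = K' := hKV.elim Sum.inr.inj fun ⟨_, _, h⟩ => absurd h Sum.inl_ne_inr
      exact Filter.mem_of_superset (hK'A hp) fun a ha => Or.inr ⟨a, ha, rfl⟩
  | univ => exact Filter.univ_mem
  | inter s t _ _ ihs iht => exact Filter.inter_mem (ihs hKV.1) (iht hKV.2)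
  | sUnion S _ ih =>
    obtain ⟨s, hsS, hKs⟩ := hKV
    exact Filter.mem_of_superset (ih s hsS hKs) fun a ha => ⟨s, hsS, ha⟩

theorem inr_mem_closure_image_inl {K : F} (hK : (K : Set NStar).Nonempty) {S : Set ℕ}
    (hS : S ∈ Filter.cofinite) : (Sum.inr K : XF F) ∈ closure (Sum.inl '' S : Set (XF F)) := by
  obtain ⟨p, hp⟩ := hK
  refine (mem_closure_iff (X := XF F)).mpr fun V hV hKV => ?_
  obtain ⟨a, haV, haS⟩ :=
    Filter.nonempty_of_mem (Filter.inter_mem (preimage_inl_mem_of_isOpen hp hV hKV) (p.2 hS))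
  exact ⟨Sum.inl a, haV, a, haS, rfl⟩

theorem mem_closure_image_inl_Ici (hne : ∀ K ∈ F, Set.Nonempty K) {N : ℕ} {y : XF F}
    (hy : ∀ m : ℕ, y = Sum.inl m → N ≤ m) : y ∈ closure (Sum.inl '' Set.Ici N : Set (XF F)) := by
  rcases y with m | K
  · exact subset_closure ⟨m, hy m rfl, rfl⟩
  · exact inr_mem_closure_image_inl (hne K K.2) (by simp)

end XF

theorem clopen_contains_cofinite_box_general (n N : ℕ) (F : Fin n → Set (Set NStar))
    (hne : ∀ i, ∀ K ∈ F i, Set.Nonempty K)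
    (U : Set (∀ i, XF (F i))) (hU : IsClopen U)
    (htrace : ∀ x : Fin n → ℕ, (∀ i, N ≤ x i) →
      (fun i => (Sum.inl (x i) : XF (F i))) ∈ U) :
    ∀ y : ∀ i, XF (F i), (∀ i, ∀ m : ℕ, y i = Sum.inl m → N ≤ m) → y ∈ U := by
  intro y hy
  have hbox : Set.univ.pi (fun i => (Sum.inl '' Set.Ici N : Set (XF (F i)))) ⊆ U := by
    intro z hz
    choose x hxN hxz using fun i => hz i (Set.mem_univ i)
    obtain rfl : (fun i => (Sum.inl (x i) : XF (F i))) = z := funext hxz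
    exact htrace x hxN
  refine hU.isClosed.closure_subset_iff.mpr hbox (mem_closure_pi.mpr fun i _ => ?_)
  exact XF.mem_closure_image_inl_Ici (hne i) (hy i)

/-- In X = ∏_{i<n} X(F_i), if a clopen U contains the cofinite box
𝕋ᴺ = (ℕ∖N)ⁿ ⊆ ℕⁿ, then U contains Tᴺ = ∏_{i<n}(X(F_i) ∖ N). -/
theorem clopen_contains_cofinite_box (n N : ℕ) (F : Fin n → Set (Set NStar))
    (hne : ∀ i, ∀ K ∈ F i, Set.Nonempty K) (hcl : ∀ i, ∀ K ∈ F i, IsClosed K)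
    (hdisj : ∀ i, ∀ K ∈ F i, ∀ L ∈ F i, K ≠ L → Disjoint K L)
    (U : Set (∀ i, XF (F i))) (hU : IsClopen U)
    (htrace : ∀ x : Fin n → ℕ, (∀ i, N ≤ x i) →
      (fun i => (Sum.inl (x i) : XF (F i))) ∈ U) :
    ∀ y : ∀ i, XF (F i), (∀ i, ∀ m : ℕ, y i = Sum.inl m → N ≤ m) → y ∈ U :=
  clopen_contains_cofinite_box_general n N F hne U hU htrace
end

section
/- If the family {F_i : i ∈ ω} satisfies condition ♺: for every infinite I ⊆ ω and every choice x_i ∈ F_i (i ∈ I), the family {x_i : i ∈ I} is not linked (i.e., there exist i ≠ j in I with x_i ∩ x_j = ∅), then the countable product P = ∏_{i∈ω} X(F_i) can be written as the disjoint union of infinitely many non-empty clopen subsets; in particular P is not CLP-compact. -/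
/-- CLP-compact: every clopen cover has a finite subcover. -/
def CLPCompact (X : Type*) [TopologicalSpace X] : Prop :=
  ∀ C : Set (Set X), (∀ U ∈ C, IsClopen U) → ⋃₀ C = Set.univ →
    ∃ D ⊆ C, D.Finite ∧ ⋃₀ D = Set.univ

/-- Condition ♺: no infinite selection x_i ∈ F_i is linked. -/
def Bicycle (F : ℕ → Set (Set NStar)) : Prop :=
  ∀ I : Set ℕ, I.Infinite → ∀ x : ℕ → Set NStar, (∀ i ∈ I, x i ∈ F i) →
    ∃ i ∈ I, ∃ j ∈ I, i ≠ j ∧ Disjoint (x i) (x j)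

/-!
The sets `U_n = {x | x i = n for all i ≤ n}` are clopen, non-empty and pairwise disjoint. Condition ♺
makes the family `(U_n)` locally finite: a point with some coordinate in `ℕ` lies in the open set where
that coordinate is fixed, which meets only finitely many `U_n`; a point with every coordinate in
`⋃ F_i` has two coordinates `K_i`, `K_j` that are disjoint, hence separated by some `A* ⊇ K_i` and
`(ℕ \ A)* ⊇ K_j`, and the corresponding neighbourhood meets no `U_n` with `n ≥ i, j`. So `⋃ U_n` is
closed, and adding its complement to `U_0` gives the partition.
-/

open Set Filter Topology

theorem Ultrafilter.isClosed_setOf_le {α : Type*} (f : Filter α) :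
    IsClosed {u : Ultrafilter α | ↑u ≤ f} := by
  have h : {u : Ultrafilter α | ↑u ≤ f} = ⋂ s ∈ f, {u | s ∈ u} := by
    ext u
    simp only [mem_ofPred_eq, mem_iInter, le_def, Ultrafilter.mem_coe]
  rw [h]
  exact isClosed_biInter fun s _ => ultrafilter_isClosed_basic s

theorem Ultrafilter.exists_setOf_mem_between {α : Type*} {K U : Set (Ultrafilter α)}
    (hK : IsCompact K) (hU : IsOpen U) (hKU : K ⊆ U) :
    ∃ A : Set α, K ⊆ {u | A ∈ u} ∧ {u | A ∈ u} ⊆ U := by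
  have hbasic : ∀ u ∈ K, ∃ s ∈ u, {v : Ultrafilter α | s ∈ v} ⊆ U := by
    intro u hu
    obtain ⟨_, ⟨s, rfl⟩, hus, hsU⟩ :=
      ultrafilterBasis_is_basis.exists_subset_of_mem_open (hKU hu) hU
    exact ⟨s, hus, hsU⟩
  choose! s hsu hsU using hbasic
  obtain ⟨t, htK, hKt⟩ := hK.elim_nhds_subcover (fun u => {v | s u ∈ v})
    fun u hu => (ultrafilter_isOpen_basic (s u)).mem_nhds (hsu u hu)
  refine ⟨⋃ u ∈ t, s u, fun v hv => ?_, fun v hv => ?_⟩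
  · obtain ⟨u, hut, hvu⟩ := mem_iUnion₂.mp (hKt hv)
    exact mem_of_superset hvu (subset_biUnion_of_mem (u := s) hut)
  · obtain ⟨u, hut, hvu⟩ := (Ultrafilter.finite_biUnion_mem_iff t.finite_toSet).mp hv
    exact hsU u (htK u hut) hvu

theorem mem_aStar_of_finite_compl (U : NStar) {A : Set ℕ} (hA : Aᶜ.Finite) : U ∈ AStar A :=
  U.2 (mem_cofinite.mpr hA)

theorem exists_subset_aStar_subset_aStar_compl {K L : Set NStar} (hK : IsClosed K)
    (hL : IsClosed L) (hKL : Disjoint K L) : ∃ A : Set ℕ, K ⊆ AStar A ∧ L ⊆ AStar Aᶜ := by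
  have hval : Topology.IsClosedEmbedding (Subtype.val : NStar → Ultrafilter ℕ) :=
    .subtypeVal (Ultrafilter.isClosed_setOf_le cofinite)
  obtain ⟨A, hKA, hAL⟩ := Ultrafilter.exists_setOf_mem_between
    (hval.isClosedMap K hK).isCompact (hval.isClosedMap L hL).isOpen_compl
    (subset_compl_iff_disjoint_right.mpr (disjoint_image_of_injective Subtype.val_injective hKL))
  refine ⟨A, fun u hu => hKA ⟨u, hu, rfl⟩, fun u hu => ?_⟩
  exact Ultrafilter.compl_mem_iff_notMem.mpr fun huA => hAL huA ⟨u, hu, rfl⟩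

namespace XF

variable {F : Set (Set NStar)}

theorem isOpen_singleton_inl (n : ℕ) : IsOpen ({Sum.inl n} : Set (XF F)) :=
  .basic _ (Or.inl ⟨n, rfl⟩)

theorem isOpen_insert_inr_image {K : F} {A : Set ℕ} (hKA : (K : Set NStar) ⊆ AStar A) :
    IsOpen (insert (Sum.inr K) (Sum.inl '' A) : Set (XF F)) :=
  .basic _ (Or.inr ⟨K, A, hKA, rfl⟩)

theorem insert_inr_image_mem_nhds {K : F} {A : Set ℕ} (hKA : (K : Set NStar) ⊆ AStar A) :
    insert (Sum.inr K) (Sum.inl '' A) ∈ nhds (X := XF F) (Sum.inr K) :=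
  (isOpen_insert_inr_image hKA).mem_nhds (mem_insert _ _)

theorem inl_mem_insert_inr_image {n : ℕ} {K : F} {A : Set ℕ} :
    (Sum.inl n : XF F) ∈ insert (Sum.inr K) (Sum.inl '' A) ↔ n ∈ A := by
  rw [mem_insert_iff, Sum.inl_injective.mem_set_image]
  exact or_iff_right Sum.inl_ne_inr

instance : T1Space (XF F) := by
  refine t1Space_iff_exists_open.mpr fun x y hxy => ?_
  cases x with
  | inl n => exact ⟨{Sum.inl n}, isOpen_singleton_inl n, rfl, Ne.symm hxy⟩
  | inr K =>
    have hfin : {m : ℕ | (Sum.inl m : XF F) ≠ y}ᶜ.Finite := by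
      refine Set.Subsingleton.finite fun m₁ h₁ m₂ h₂ => Sum.inl_injective (β := F) ?_
      simp only [mem_compl_iff, mem_ofPred_eq, not_not] at h₁ h₂
      rw [h₁, h₂]
    refine ⟨_, isOpen_insert_inr_image fun U _ => mem_aStar_of_finite_compl U hfin,
      mem_insert _ _, ?_⟩
    rintro (h | ⟨m, hm, rfl⟩)
    · exact hxy h.symm
    · exact hm rfl

end XF

section prefixBlock

variable {F : ℕ → Set (Set NStar)}

variable (F) in
/-- The set `U_n` of the paper. -/
def prefixBlock (n : ℕ) : Set (∀ i, XF (F i)) :=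
  (Iic n).pi fun _ => {Sum.inl n}

theorem mem_prefixBlock {n : ℕ} {x : ∀ i, XF (F i)} :
    x ∈ prefixBlock F n ↔ ∀ i ≤ n, x i = Sum.inl n :=
  Iff.rfl

theorem isClopen_prefixBlock (n : ℕ) : IsClopen (prefixBlock F n) :=
  ⟨isClosed_set_pi fun _ _ => isClosed_singleton,
    isOpen_set_pi (finite_Iic n) fun _ _ => XF.isOpen_singleton_inl n⟩

theorem prefixBlock_nonempty (n : ℕ) : (prefixBlock F n).Nonempty :=
  ⟨fun _ => Sum.inl n, mem_prefixBlock.mpr fun _ _ => rfl⟩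

theorem pairwise_disjoint_prefixBlock : Pairwise (Function.onFun Disjoint (prefixBlock F)) := by
  intro n m hnm
  refine disjoint_left.mpr fun x hxn hxm => hnm (Sum.inl_injective (β := F 0) ?_)
  rw [← mem_prefixBlock.mp hxn 0 n.zero_le, ← mem_prefixBlock.mp hxm 0 m.zero_le]

theorem exists_mem_nhds_finite_prefixBlock_inter {x : ∀ i, XF (F i)} {i j : ℕ}
    {O : Set (XF (F i))} {O' : Set (XF (F j))} (hO : O ∈ 𝓝 (x i)) (hO' : O' ∈ 𝓝 (x j))
    (hfin : {n : ℕ | Sum.inl n ∈ O ∧ Sum.inl n ∈ O'}.Finite) :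
    ∃ t ∈ 𝓝 x, {n | (prefixBlock F n ∩ t).Nonempty}.Finite := by
  refine ⟨(fun y => y i) ⁻¹' O ∩ (fun y => y j) ⁻¹' O',
    inter_mem ((continuous_apply i).continuousAt.preimage_mem_nhds hO)
      ((continuous_apply j).continuousAt.preimage_mem_nhds hO'),
    ((finite_Iic (max i j)).union hfin).subset ?_⟩
  rintro n ⟨y, hy, hyO, hyO'⟩
  by_cases hn : n ≤ max i j
  · exact Or.inl hn
  · have hyi := mem_prefixBlock.mp hy i (by omega)
    have hyj := mem_prefixBlock.mp hy j (by omega)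
    exact Or.inr ⟨hyi ▸ hyO, hyj ▸ hyO'⟩

theorem locallyFinite_prefixBlock (hcl : ∀ i, ∀ K ∈ F i, IsClosed K) (hbike : Bicycle F) :
    LocallyFinite (prefixBlock F) := by
  intro x
  by_cases hinl : ∃ i m, x i = Sum.inl m
  · obtain ⟨i, m, hxi⟩ := hinl
    have hO : ({Sum.inl m} : Set (XF (F i))) ∈ 𝓝 (x i) := by
      rw [hxi]
      exact (XF.isOpen_singleton_inl m).mem_nhds rfl
    exact exists_mem_nhds_finite_prefixBlock_inter hO hO
      ((finite_singleton m).subset fun n hn => Sum.inl_injective hn.1)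
  · simp only [not_exists] at hinl
    have hinr : ∀ i, ∃ K : F i, x i = Sum.inr K := fun i => by
      cases hxi : x i with
      | inl m => exact absurd hxi (hinl i m)
      | inr K => exact ⟨K, rfl⟩
    choose K hK using hinr
    obtain ⟨i, -, j, -, -, hKij⟩ :=
      hbike univ infinite_univ (fun i => K i) fun i _ => (K i).2
    obtain ⟨A, hKA, hKAc⟩ :=
      exists_subset_aStar_subset_aStar_compl (hcl i _ (K i).2) (hcl j _ (K j).2) hKij
    have hOi : (insert (Sum.inr (K i)) (Sum.inl '' A) : Set (XF (F i))) ∈ 𝓝 (x i) := by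
      rw [hK i]
      exact XF.insert_inr_image_mem_nhds hKA
    have hOj : (insert (Sum.inr (K j)) (Sum.inl '' Aᶜ) : Set (XF (F j))) ∈ 𝓝 (x j) := by
      rw [hK j]
      exact XF.insert_inr_image_mem_nhds hKAc
    refine exists_mem_nhds_finite_prefixBlock_inter hOi hOj (finite_empty.subset ?_)
    rintro n ⟨hnA, hnAc⟩
    exact XF.inl_mem_insert_inr_image.mp hnAc (XF.inl_mem_insert_inr_image.mp hnA)

end prefixBlock

theorem exists_clopen_partition_of_locallyFinite {X : Type*} [TopologicalSpace X]
    {U : ℕ → Set X} (hclopen : ∀ k, IsClopen (U k)) (hne : ∀ k, (U k).Nonempty)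
    (hdisj : Pairwise (Function.onFun Disjoint U)) (hU : LocallyFinite U) :
    ∃ V : ℕ → Set X, (∀ k, IsClopen (V k)) ∧ (∀ k, (V k).Nonempty) ∧
      Pairwise (Function.onFun Disjoint V) ∧ ⋃ k, V k = univ := by
  set W := (⋃ k, U k)ᶜ
  have hW : IsClopen W := ⟨(isOpen_iUnion fun k => (hclopen k).isOpen).isClosed_compl,
    (hU.isClosed_iUnion fun k => (hclopen k).isClosed).isOpen_compl⟩
  have hUW : ∀ k, Disjoint (U k) W := fun k => disjoint_compl_right.mono_left (subset_iUnion U k)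
  set V := Function.update U 0 (U 0 ∪ W)
  have hV_of_ne : ∀ k ≠ 0, V k = U k := fun k hk => Function.update_of_ne hk _ _
  have hUV : ∀ k, U k ⊆ V k := by
    intro k
    rcases eq_or_ne k 0 with rfl | hk
    · simp only [V, Function.update_self, subset_union_left]
    · rw [hV_of_ne k hk]
  have hVUW : ∀ k, V k ⊆ U k ∪ W := by
    intro k
    rcases eq_or_ne k 0 with rfl | hk
    · simp only [V, Function.update_self, subset_rfl]
    · rw [hV_of_ne k hk]
      exact subset_union_left
  refine ⟨V, fun k => ?_, fun k => (hne k).mono (hUV k), fun k l hkl => ?_, ?_⟩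
  · rcases eq_or_ne k 0 with rfl | hk
    · simpa only [V, Function.update_self] using (hclopen 0).union hW
    · rw [hV_of_ne k hk]
      exact hclopen k
  · rcases eq_or_ne l 0 with rfl | hl
    · rw [Function.onFun, hV_of_ne k hkl]
      exact (disjoint_union_right.mpr ⟨hdisj hkl, hUW k⟩).mono_right (hVUW 0)
    · rw [Function.onFun, hV_of_ne l hl]
      exact (disjoint_union_left.mpr ⟨hdisj hkl, (hUW l).symm⟩).mono_left (hVUW k)
  · refine eq_univ_of_forall fun x => ?_
    by_cases hx : x ∈ W
    · exact mem_iUnion.mpr ⟨0, by simp only [V, Function.update_self, mem_union, hx, or_true]⟩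
    · obtain ⟨k, hk⟩ := mem_iUnion.mp (not_not.mp hx)
      exact mem_iUnion.mpr ⟨k, hUV k hk⟩

theorem not_clpCompact_of_clopen_partition {X : Type*} [TopologicalSpace X] {U : ℕ → Set X}
    (hclopen : ∀ k, IsClopen (U k)) (hne : ∀ k, (U k).Nonempty)
    (hdisj : Pairwise (Function.onFun Disjoint U)) (hcover : ⋃ k, U k = univ) :
    ¬ CLPCompact X := by
  intro hX
  obtain ⟨D, hDU, hD, hDcover⟩ := hX (range U) (forall_mem_range.mpr hclopen)
    (by rwa [sUnion_range])
  have hUD : range U ⊆ D := by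
    rintro _ ⟨k, rfl⟩
    obtain ⟨x, hx⟩ := hne k
    obtain ⟨_, hV, hxV⟩ := mem_sUnion.mp (hDcover ▸ mem_univ x : x ∈ ⋃₀ D)
    obtain ⟨l, rfl⟩ := hDU hV
    obtain rfl : l = k := by_contra fun hlk => disjoint_left.mp (hdisj hlk) hxV hx
    exact hV
  have hinj : Function.Injective U := by
    intro k l hkl
    by_contra hkl'
    have h := hdisj hkl'
    rw [Function.onFun, hkl, disjoint_self] at h
    exact (hne l).ne_empty h
  exact infinite_range_of_injective hinj (hD.subset hUD)

theorem full_product_partition_general (F : ℕ → Set (Set NStar))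
    (hcl : ∀ i, ∀ K ∈ F i, IsClosed K)
    (hbike : Bicycle F) :
    (∃ U : ℕ → Set (∀ i : ℕ, XF (F i)), (∀ k, IsClopen (U k)) ∧
      (∀ k, (U k).Nonempty) ∧ Pairwise (Function.onFun Disjoint U) ∧
      ⋃ k, U k = Set.univ) ∧
    ¬ CLPCompact (∀ i : ℕ, XF (F i)) := by
  obtain ⟨V, hclopen, hne, hdisj, hcover⟩ := exists_clopen_partition_of_locallyFinite
    isClopen_prefixBlock prefixBlock_nonempty pairwise_disjoint_prefixBlock
    (locallyFinite_prefixBlock hcl hbike)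
  exact ⟨⟨V, hclopen, hne, hdisj, hcover⟩,
    not_clpCompact_of_clopen_partition hclopen hne hdisj hcover⟩

/-- If ♺ holds, then P = ∏_{i∈ω} X(F_i) is the disjoint union of infinitely many
non-empty clopen subsets; in particular P is not CLP-compact. -/
theorem full_product_partition (F : ℕ → Set (Set NStar))
    (hne : ∀ i, ∀ K ∈ F i, Set.Nonempty K) (hcl : ∀ i, ∀ K ∈ F i, IsClosed K)
    (hdisj : ∀ i, ∀ K ∈ F i, ∀ L ∈ F i, K ≠ L → Disjoint K L)
    (hbike : Bicycle F) :
    (∃ U : ℕ → Set (∀ i : ℕ, XF (F i)), (∀ k, IsClopen (U k)) ∧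
      (∀ k, (U k).Nonempty) ∧ Pairwise (Function.onFun Disjoint U) ∧
      ⋃ k, U k = Set.univ) ∧
    ¬ CLPCompact (∀ i : ℕ, XF (F i)) :=
  full_product_partition_general F hcl hbike
end

section
/- With X = {0} ⊕ X_0 ⊕ X_1 ⊕ ⋯ as above, there is a continuous surjection from X^ω onto ∏_{i∈ω} X_i; consequently, if ∏_{i∈ω} X_i can be partitioned into infinitely many non-empty clopen sets, then X^ω is not CLP-compact. -/
/-- The one-point convergent sum X = {0} ⊕ X₀ ⊕ X₁ ⊕ ⋯ ; none plays the role of 0. -/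
def SumSpace (X : ℕ → Type*) : Type _ := Option (Σ i, X i)

/-- The coarsest topology making every open subset of every Xᵢ open, and every tail
{0} ∪ ⋃_{j≥i} Xⱼ open. -/
instance (X : ℕ → Type*) [∀ i, TopologicalSpace (X i)] : TopologicalSpace (SumSpace X) :=
  TopologicalSpace.generateFrom
    ({S | ∃ (i : ℕ) (U : Set (X i)), IsOpen U ∧
        S = (fun x : X i => (some ⟨i, x⟩ : SumSpace X)) '' U} ∪
     {S | ∃ i : ℕ, S = insert (none : SumSpace X)
        {y : SumSpace X | ∃ (j : ℕ) (x : X j), i ≤ j ∧ y = some ⟨j, x⟩}})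

/-! Each retraction `X → Xᵢ` (identity on `Xᵢ`, constant elsewhere) is continuous because `Xᵢ`
is clopen in `X` and its open sets stay open in `X`; the product of these retractions maps
`X^ω` onto `∏ᵢ Xᵢ`. A continuous image of a CLP-compact space is CLP-compact, and a partition
into infinitely many non-empty clopen sets is a clopen cover without a finite subcover. -/

open Function Set

section CLPCompact

variable {Y Z : Type*} [TopologicalSpace Y] [TopologicalSpace Z]

theorem CLPCompact.of_surjective (hY : CLPCompact Y) {f : Y → Z} (hf : Continuous f)
    (hsurj : Surjective f) : CLPCompact Z := by
  intro C hC hcover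
  have hpull : ⋃₀ (preimage f '' C) = univ := by
    rw [sUnion_image, ← preimage_iUnion₂, ← sUnion_eq_biUnion, hcover, preimage_univ]
  obtain ⟨D, hDC, hD, hDcover⟩ := exists_subset_image_finite_and.1 <|
    hY _ (by rintro _ ⟨U, hU, rfl⟩; exact (hC U hU).preimage hf) hpull
  refine ⟨D, hDC, hD, hsurj.preimage_injective ?_⟩
  rwa [sUnion_image, ← preimage_iUnion₂, ← sUnion_eq_biUnion] at hDcover

theorem not_clpCompact_of_partition {ι : Type*} [Infinite ι] {U : ι → Set Y}
    (hclopen : ∀ k, IsClopen (U k)) (hne : ∀ k, (U k).Nonempty)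
    (hdisj : Pairwise (Disjoint on U)) (hcover : ⋃ k, U k = univ) : ¬ CLPCompact Y := by
  intro hY
  have hfin := hY (range U) (by rintro _ ⟨k, rfl⟩; exact hclopen k) (by rwa [sUnion_range])
  rw [← image_univ] at hfin
  obtain ⟨t, -, ht, htcover⟩ := exists_subset_image_finite_and.1 hfin
  obtain ⟨k, hk⟩ := ht.exists_notMem
  obtain ⟨y, hy⟩ := hne k
  obtain ⟨_, ⟨j, hj, rfl⟩, hyj⟩ := htcover.symm.subset (mem_univ y)
  exact (hdisj (ne_of_mem_of_not_mem hj hk)).le_bot ⟨hyj, hy⟩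

end CLPCompact

theorem continuous_extend_const {α β γ : Type*} [TopologicalSpace α] [TopologicalSpace β]
    [TopologicalSpace γ] {e : α → β} (he : Injective e) (he_open : IsOpenMap e)
    (he_closed : IsClosed (range e)) {g : α → γ} (hg : Continuous g) (c : γ) :
    Continuous (extend e g fun _ => c) := by
  rw [continuous_def]
  intro V hV
  have hpre : extend e g (fun _ => c) ⁻¹' V = e '' (g ⁻¹' V) ∪ (range e)ᶜ ∩ {_y | c ∈ V} := by
    ext y
    by_cases hy : y ∈ range e
    · obtain ⟨x, rfl⟩ := hy
      simp [he.extend_apply, he.mem_set_image]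
    · have hy' : ∀ x, e x ≠ y := fun x hx => hy ⟨x, hx⟩
      simp [hy, hy']
  rw [hpre]
  refine (he_open _ (hV.preimage hg)).union ?_
  by_cases hc : c ∈ V
  · simpa [hc] using he_closed
  · simp [hc]

namespace SumSpace

variable {X : ℕ → Type*}

def incl (i : ℕ) (x : X i) : SumSpace X := some ⟨i, x⟩

theorem incl_injective (i : ℕ) : Injective (incl (X := X) i) :=
  fun _ _ h => sigma_mk_injective (Option.some_injective _ h)

noncomputable def retract {i : ℕ} (c : X i) : SumSpace X → X i :=
  extend (incl i) id fun _ => c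

theorem retract_incl {i : ℕ} (c x : X i) : retract c (incl i x) = x :=
  (incl_injective i).extend_apply _ _ x

variable [∀ i, TopologicalSpace (X i)]

theorem isOpenMap_incl (i : ℕ) : IsOpenMap (incl (X := X) i) :=
  fun U hU => TopologicalSpace.GenerateOpen.basic _ (Or.inl ⟨i, U, hU, rfl⟩)

theorem isClosed_range_incl (i : ℕ) : IsClosed (range (incl (X := X) i)) := by
  have htail : IsOpen (insert (none : SumSpace X)
      {y : SumSpace X | ∃ (j : ℕ) (x : X j), i + 1 ≤ j ∧ y = some ⟨j, x⟩}) :=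
    TopologicalSpace.GenerateOpen.basic _ (Or.inr ⟨i + 1, rfl⟩)
  have hcompl : (range (incl (X := X) i))ᶜ = insert none
      {y : SumSpace X | ∃ (j : ℕ) (x : X j), i + 1 ≤ j ∧ y = some ⟨j, x⟩} ∪
      ⋃ j < i, range (incl (X := X) j) := by
    unfold incl SumSpace
    ext (_ | ⟨j, x⟩)
    · simp
    · simp only [mem_compl_iff, mem_range, Option.some.injEq, Sigma.mk.injEq, exists_and_left,
        not_and, not_exists, Order.add_one_le_iff, mem_union, mem_insert_iff, reduceCtorEq,
        mem_ofPred_eq, existsAndEq, heq_eq_eq, exists_eq', and_self, and_true, false_or,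
        mem_iUnion, exists_prop, exists_eq_left, exists_eq, lt_or_lt_iff_ne, ne_eq]
      refine ⟨fun h hij => ?_, fun h hij => absurd hij h⟩
      subst hij
      exact h rfl x HEq.rfl
  rw [← isOpen_compl_iff, hcompl]
  exact htail.union (isOpen_biUnion fun j _ => isOpenMap_incl j |>.isOpen_range)

theorem continuous_retract {i : ℕ} (c : X i) : Continuous (retract c) :=
  continuous_extend_const (incl_injective i) (isOpenMap_incl i) (isClosed_range_incl i)
    continuous_id c

end SumSpace

/-- There is a continuous surjection X^ω → ∏ᵢ Xᵢ; hence if ∏ᵢ Xᵢ is partitioned into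
infinitely many non-empty clopen sets, then X^ω is not CLP-compact. -/
theorem sumSpace_power_not_clp (X : ℕ → Type*) [∀ i, TopologicalSpace (X i)]
    (hne : ∀ i, Nonempty (X i)) :
    (∃ f : (ℕ → SumSpace X) → ∀ i, X i, Continuous f ∧ Function.Surjective f) ∧
    ((∃ U : ℕ → Set (∀ i, X i), (∀ k, IsClopen (U k)) ∧ (∀ k, (U k).Nonempty) ∧
        Pairwise (Function.onFun Disjoint U) ∧ ⋃ k, U k = Set.univ) →
      ¬ CLPCompact (ℕ → SumSpace X)) := by
  let f : (ℕ → SumSpace X) → ∀ i, X i := fun y i => SumSpace.retract (hne i).some (y i)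
  have hf : Continuous f :=
    continuous_pi fun i => (SumSpace.continuous_retract _).comp (continuous_apply i)
  have hsurj : Surjective f := fun x =>
    ⟨fun i => SumSpace.incl i (x i), funext fun i => SumSpace.retract_incl _ (x i)⟩
  refine ⟨⟨f, hf, hsurj⟩, ?_⟩
  rintro ⟨U, hclopen, hU, hdisj, hcover⟩ hpow
  exact not_clpCompact_of_partition hclopen hU hdisj hcover (hpow.of_surjective hf hsurj)
end
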